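/- Let E be a rearrangement-invariant quasi-Banach function space on (0,∞) with functional ρ_E and Boyd indices p_E, q_E. Let 0 < Θ < ∞ and 0 < r < p_E, and assume either (q_E < ∞ and 1/Θ + 1/q_E > 1/r) or (q_E = ∞ and 1/Θ ≥ 1/r). Then ρ_E(t ↦ min{t^{-1/r}, t^{1/Θ − 1/r}}) < ∞. -/

import Mathlib

/-!
On `[1, ∞)` the function is at most `min (t^(-1/r)) 1`, and when `β = 1/r - 1/Θ > 0` it is
`t^(-β)` on `(0, 1)`; otherwise it is at most `1` there. Both pieces are dominated by series
`∑ₖ wₖ χ_(0,Lₖ)` with geometric `Lₖ` (`b^(k+1)`, resp. `b^(-k)`). Since `χ_(0,L/a)` is the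
dilate `D_a χ_(0,L)`, `ρ(χ_(0,Lₖ)) ≤ ρ(χ_(0,1)) ‖D_{1/Lₖ}‖`, and the Boyd estimates for some
`p > r` (resp. `1/q > β`) make the terms decay like `b^(-δ k)` for some `δ > 0`. Taking
`b^δ = 2C` absorbs the factor `C^(k+1)` lost in the iterated quasi-triangle inequality, and the
Fatou property passes the bound to the infinite sum.
-/

open MeasureTheory Set Filter
open scoped ENNReal NNReal

noncomputable section

/-- The non-increasing rearrangement of a function on `(0, ∞)` (with Lebesgue measure):
`f^*(t) = inf {λ : |{s > 0 : |f(s)| > λ}| ≤ t}`. -/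
def rearr (f : ℝ → ℝ) (t : ℝ) : ℝ≥0∞ :=
  sInf {lam : ℝ≥0∞ |
    volume {s : ℝ | 0 < s ∧ lam < ENNReal.ofReal |f s|} ≤ ENNReal.ofReal t}

/-- A rearrangement-invariant quasi-Banach function space on `(0,∞)`, given by the
functional `ρ` on (extended-)nonnegative measurable functions on `(0,∞)`. -/
structure RIQBFS where
  ρ : (ℝ → ℝ≥0∞) → ℝ≥0∞
  C : ℝ
  one_le_C : 1 ≤ C
  eq_zero_iff : ∀ f : ℝ → ℝ≥0∞, ρ f = 0 ↔ f =ᵐ[volume.restrict (Set.Ioi (0 : ℝ))] 0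
  smul_eq : ∀ (c : ℝ≥0) (f : ℝ → ℝ≥0∞), ρ (fun t => (c : ℝ≥0∞) * f t) = (c : ℝ≥0∞) * ρ f
  quasi_triangle : ∀ f g : ℝ → ℝ≥0∞, ρ (fun t => f t + g t) ≤ ENNReal.ofReal C * (ρ f + ρ g)
  mono : ∀ f g : ℝ → ℝ≥0∞,
    (∀ᵐ t ∂(volume.restrict (Set.Ioi (0 : ℝ))), g t ≤ f t) → ρ g ≤ ρ f
  fatou : ∀ (fn : ℕ → ℝ → ℝ≥0∞) (f : ℝ → ℝ≥0∞),
    (∀ n, ∀ᵐ t ∂(volume.restrict (Set.Ioi (0 : ℝ))), fn n t ≤ fn (n + 1) t) →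
    (∀ᵐ t ∂(volume.restrict (Set.Ioi (0 : ℝ))),
      Filter.Tendsto (fun n => fn n t) Filter.atTop (nhds (f t))) →
    Filter.Tendsto (fun n => ρ (fn n)) Filter.atTop (nhds (ρ f))
  indicator_finite : ∀ ω : Set ℝ, MeasurableSet ω → ω ⊆ Set.Ioi (0 : ℝ) → volume ω < ⊤ →
    ρ (Set.indicator ω fun _ => 1) < ⊤

/-- The quasi-norm of the space `E`: `‖f‖_E = ρ_E (f^*)`. -/
def RIQBFS.normE (E : RIQBFS) (f : ℝ → ℝ) : ℝ≥0∞ := E.ρ (rearr f)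

/-- The operator norm of the dilation operator `(D_a f)(t) = f (a t)` on `E`. -/
def dilNorm (E : RIQBFS) (a : ℝ) : ℝ≥0∞ :=
  ⨆ (f : ℝ → ℝ) (_ : Measurable f) (_ : E.normE f ≤ 1), E.normE fun t => f (a * t)

/-- The lower Boyd index
`p_E = sup {p > 0 : ∃ c > 0, ∀ 0 < a < 1, ‖D_a‖ ≤ c a^{-1/p}}` (an element of `(0, ∞]`). -/
def lowerBoyd (E : RIQBFS) : ℝ≥0∞ :=
  sSup (ENNReal.ofReal ''
    {p : ℝ | 0 < p ∧ ∃ c : ℝ, 0 < c ∧ ∀ a : ℝ, 0 < a → a < 1 →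
      dilNorm E a ≤ ENNReal.ofReal (c * a ^ (-(1 / p)))})

/-- The upper Boyd index
`q_E = inf {q > 0 : ∃ c > 0, ∀ a ≥ 1, ‖D_a‖ ≤ c a^{-1/q}}` (an element of `(0, ∞]`,
with `inf ∅ = ∞`). -/
def upperBoyd (E : RIQBFS) : ℝ≥0∞ :=
  sInf (ENNReal.ofReal ''
    {q : ℝ | 0 < q ∧ ∃ c : ℝ, 0 < c ∧ ∀ a : ℝ, 1 ≤ a →
      dilNorm E a ≤ ENNReal.ofReal (c * a ^ (-(1 / q)))})


def chiIoo (L : ℝ) : ℝ → ℝ≥0∞ := (Ioo 0 L).indicator fun _ => 1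

theorem rearr_indicator_Ioo (c : ℝ≥0) (L : ℝ) {t : ℝ} (ht : 0 < t) :
    rearr ((Ioo 0 L).indicator fun _ => (c : ℝ)) t = c * chiIoo L t := by
  have hdist : ∀ lam : ℝ≥0∞,
      {s : ℝ | 0 < s ∧ lam < ENNReal.ofReal |(Ioo 0 L).indicator (fun _ => (c : ℝ)) s|}
        = if lam < c then Ioo 0 L else ∅ := by
    intro lam
    ext s
    by_cases hs : s ∈ Ioo 0 L <;> split_ifs with hlam <;> simp_all
  unfold rearr chiIoo
  by_cases htL : t < L
  · rw [indicator_of_mem (mem_Ioo.2 ⟨ht, htL⟩), mul_one]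
    refine le_antisymm (sInf_le (by simp [hdist])) (le_sInf fun lam hlam => ?_)
    by_contra! hlt
    rw [mem_ofPred_eq, hdist, if_pos hlt, Real.volume_Ioo, sub_zero,
      ENNReal.ofReal_le_ofReal_iff ht.le] at hlam
    exact hlam.not_gt htL
  · rw [indicator_of_notMem (fun h => htL h.2), mul_zero]
    refine le_antisymm (sInf_le ?_) zero_le
    rw [mem_ofPred_eq, hdist]
    split_ifs
    · rw [Real.volume_Ioo, sub_zero]
      exact ENNReal.ofReal_le_ofReal (not_lt.1 htL)
    · simp

theorem summable_pow_mul_rpow_sub {C δ : ℝ} (hC : 0 < C) (hδ : 0 < δ) (e : ℝ) :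
    Summable fun k : ℕ => C ^ (k + 1) * ((2 * C) ^ δ⁻¹) ^ (e - δ * k) := by
  set b := (2 * C) ^ δ⁻¹
  have hb : 0 < b := by positivity
  have hbδ : b ^ δ = 2 * C := by
    rw [← Real.rpow_mul (by positivity), inv_mul_cancel₀ hδ.ne', Real.rpow_one]
  have hterm : ∀ k : ℕ, C ^ (k + 1) * b ^ (e - δ * k) = C * b ^ e * (1 / 2) ^ k := by
    intro k
    rw [Real.rpow_sub hb, Real.rpow_mul hb.le, hbδ, Real.rpow_natCast, mul_pow, pow_succ,
      one_div, inv_pow]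
    field_simp
  simpa only [hterm] using summable_geometric_two.mul_left (C * b ^ e)

theorem exists_nat_rpow_neg_le_lt {b t : ℝ} (hb : 1 < b) (ht0 : 0 < t) (ht1 : t < 1) :
    ∃ k : ℕ, b ^ (-((k : ℝ) + 1)) ≤ t ∧ t < b ^ (-(k : ℝ)) := by
  obtain ⟨n, hn, hn'⟩ := exists_mem_Ico_zpow ht0 hb
  have hneg : n < 0 := by
    by_contra! h
    exact (hn.trans_lt ht1).not_ge (one_le_zpow₀ hb.le h)
  obtain ⟨k, rfl⟩ : ∃ k : ℕ, n = -(k + 1) := ⟨(-(n + 1)).toNat, by omega⟩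
  rw [← Real.rpow_intCast] at hn hn'
  push_cast at hn hn'
  exact ⟨k, hn, by simpa using hn'⟩

namespace RIQBFS

variable (E : RIQBFS)

theorem C_pos : 0 < E.C :=
  zero_lt_one.trans_le E.one_le_C

theorem rho_mono_pos {f g : ℝ → ℝ≥0∞} (h : ∀ t, 0 < t → f t ≤ g t) :
    E.ρ f ≤ E.ρ g :=
  E.mono g f ((ae_restrict_iff' measurableSet_Ioi).2 (ae_of_all _ h))

theorem rho_congr_pos {f g : ℝ → ℝ≥0∞} (h : ∀ t, 0 < t → f t = g t) :
    E.ρ f = E.ρ g :=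
  le_antisymm (E.rho_mono_pos fun t ht => (h t ht).le) (E.rho_mono_pos fun t ht => (h t ht).ge)

theorem rho_zero : E.ρ (fun _ => 0) = 0 :=
  (E.eq_zero_iff 0).2 EventuallyEq.rfl

theorem rho_ofReal_mul (x : ℝ) (f : ℝ → ℝ≥0∞) :
    E.ρ (fun t => ENNReal.ofReal x * f t) = ENNReal.ofReal x * E.ρ f :=
  E.smul_eq x.toNNReal f

theorem rho_sum_range_le (s : ℕ → ℝ → ℝ≥0∞) (n : ℕ) :
    E.ρ (fun t => ∑ k ∈ Finset.range n, s k t)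
      ≤ ∑ k ∈ Finset.range n, ENNReal.ofReal E.C ^ (k + 1) * E.ρ (s k) := by
  induction n generalizing s with
  | zero => simpa using E.rho_zero.le
  | succ n ih =>
    simp only [Finset.sum_range_succ']
    calc E.ρ (fun t => ∑ k ∈ Finset.range n, s (k + 1) t + s 0 t)
        ≤ ENNReal.ofReal E.C *
            (E.ρ (fun t => ∑ k ∈ Finset.range n, s (k + 1) t) + E.ρ (s 0)) :=
          E.quasi_triangle _ _
      _ ≤ ENNReal.ofReal E.C * (∑ k ∈ Finset.range n,
            ENNReal.ofReal E.C ^ (k + 1) * E.ρ (s (k + 1)) + E.ρ (s 0)) := by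
          gcongr
          exact ih _
      _ = _ := by
          rw [mul_add, Finset.mul_sum]
          congr 1
          · exact Finset.sum_congr rfl fun k _ => by ring
          · ring

theorem rho_tsum_le (s : ℕ → ℝ → ℝ≥0∞) :
    E.ρ (fun t => ∑' k, s k t) ≤ ∑' k, ENNReal.ofReal E.C ^ (k + 1) * E.ρ (s k) := by
  have hlim := E.fatou (fun n t => ∑ k ∈ Finset.range n, s k t) (fun t => ∑' k, s k t)
    (fun n => ae_of_all _ fun t =>
      Finset.sum_le_sum_of_subset (Finset.range_subset_range.2 n.le_succ))
    (ae_of_all _ fun t => ENNReal.tendsto_nat_tsum _)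
  exact le_of_tendsto' hlim fun n => (E.rho_sum_range_le s n).trans (ENNReal.sum_le_tsum _)

theorem normE_indicator_Ioo (c : ℝ≥0) (L : ℝ) :
    E.normE ((Ioo 0 L).indicator fun _ => (c : ℝ)) = c * E.ρ (chiIoo L) := by
  rw [normE, ← E.smul_eq]
  exact E.rho_congr_pos fun t ht => rearr_indicator_Ioo c L ht

theorem rho_chiIoo_lt_top (L : ℝ) : E.ρ (chiIoo L) < ⊤ :=
  E.indicator_finite _ measurableSet_Ioo (fun _ h => h.1) (by simp [Real.volume_Ioo])

theorem rho_chiIoo_ne_zero {L : ℝ} (hL : 0 < L) : E.ρ (chiIoo L) ≠ 0 := by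
  rw [Ne, E.eq_zero_iff, EventuallyEq, ae_restrict_iff' measurableSet_Ioi]
  intro h
  have hnull : volume (Ioo 0 L) = 0 :=
    measure_eq_zero_iff_ae_notMem.2
      (h.mono fun t ht hmem => by simp [chiIoo, hmem, hmem.1] at ht)
  exact hL.not_ge (by simpa [Real.volume_Ioo] using hnull)

theorem rho_chiIoo_div_le {L a : ℝ} (hL : 0 < L) (ha : 0 < a) :
    E.ρ (chiIoo (L / a)) ≤ E.ρ (chiIoo L) * dilNorm E a := by
  set N := E.ρ (chiIoo L)
  have hN : N ≠ 0 := E.rho_chiIoo_ne_zero hL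
  have hN' : N ≠ ⊤ := (E.rho_chiIoo_lt_top L).ne
  have hNinv : ((N.toNNReal⁻¹ : ℝ≥0) : ℝ≥0∞) = N⁻¹ := by
    rw [ENNReal.coe_inv (ENNReal.toNNReal_ne_zero.2 ⟨hN, hN'⟩), ENNReal.coe_toNNReal hN']
  set φ : ℝ → ℝ := (Ioo 0 L).indicator fun _ => ((N.toNNReal⁻¹ : ℝ≥0) : ℝ)
  have hφ : E.normE φ = 1 := by
    rw [E.normE_indicator_Ioo, hNinv, ENNReal.inv_mul_cancel hN hN']
  have hφa : (fun t => φ (a * t))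
      = (Ioo 0 (L / a)).indicator fun _ => ((N.toNNReal⁻¹ : ℝ≥0) : ℝ) := by
    ext t
    change (Ioo 0 L).indicator _ (a * t) = _
    rw [← indicator_comp_right (a * ·), preimage_const_mul_Ioo₀ _ _ ha, zero_div]
    rfl
  have hdil : N⁻¹ * E.ρ (chiIoo (L / a)) ≤ dilNorm E a := by
    rw [← hNinv, ← E.normE_indicator_Ioo, ← hφa]
    exact le_iSup_of_le φ (le_iSup_of_le
      (measurable_const.indicator measurableSet_Ioo) (le_iSup_of_le hφ.le le_rfl))
  exact (ENNReal.inv_mul_le_iff hN hN').1 hdil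

theorem rho_tsum_chiIoo_lt_top (L w c : ℕ → ℝ) (hL : ∀ k, 0 < L k) (hw : ∀ k, 0 ≤ w k)
    (hc : ∀ k, 0 ≤ c k) (hdil : ∀ k, dilNorm E (L k)⁻¹ ≤ ENNReal.ofReal (c k))
    (hsum : Summable fun k => E.C ^ (k + 1) * (w k * c k)) :
    E.ρ (fun t => ∑' k, ENNReal.ofReal (w k) * chiIoo (L k) t) < ⊤ := by
  have hC : 0 ≤ E.C := E.C_pos.le
  have hterm : ∀ k, ENNReal.ofReal E.C ^ (k + 1) *
      E.ρ (fun t => ENNReal.ofReal (w k) * chiIoo (L k) t)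
        ≤ E.ρ (chiIoo 1) * ENNReal.ofReal (E.C ^ (k + 1) * (w k * c k)) := by
    intro k
    have hchi := E.rho_chiIoo_div_le one_pos (inv_pos.2 (hL k))
    rw [one_div, inv_inv] at hchi
    rw [rho_ofReal_mul, ENNReal.ofReal_mul (by positivity), ENNReal.ofReal_mul (hw k),
      ENNReal.ofReal_pow hC]
    calc ENNReal.ofReal E.C ^ (k + 1) * (ENNReal.ofReal (w k) * E.ρ (chiIoo (L k)))
        ≤ ENNReal.ofReal E.C ^ (k + 1) * (ENNReal.ofReal (w k) *
            (E.ρ (chiIoo 1) * ENNReal.ofReal (c k))) := by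
          gcongr
          exact hchi.trans (by gcongr; exact hdil k)
      _ = _ := by ring
  calc E.ρ (fun t => ∑' k, ENNReal.ofReal (w k) * chiIoo (L k) t)
      ≤ ∑' k, ENNReal.ofReal E.C ^ (k + 1) *
          E.ρ (fun t => ENNReal.ofReal (w k) * chiIoo (L k) t) := E.rho_tsum_le _
    _ ≤ ∑' k, E.ρ (chiIoo 1) * ENNReal.ofReal (E.C ^ (k + 1) * (w k * c k)) :=
        ENNReal.tsum_le_tsum hterm
    _ = E.ρ (chiIoo 1) * ENNReal.ofReal (∑' k, E.C ^ (k + 1) * (w k * c k)) := by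
        rw [ENNReal.tsum_mul_left, ENNReal.ofReal_tsum_of_nonneg (fun k => by
          have := hw k; have := hc k; positivity) hsum]
    _ < ⊤ := ENNReal.mul_lt_top (E.rho_chiIoo_lt_top 1) ENNReal.ofReal_lt_top

theorem rho_min_rpow_neg_one_lt_top {r p c : ℝ} (hr : 0 < r) (hrp : r < p) (hc : 0 ≤ c)
    (hdil : ∀ a, 0 < a → a < 1 → dilNorm E a ≤ ENNReal.ofReal (c * a ^ (-(1 / p)))) :
    E.ρ (fun t => min (ENNReal.ofReal (t ^ (-(1 / r)))) 1) < ⊤ := by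
  set δ := 1 / r - 1 / p with hδ_def
  have hδ : 0 < δ := sub_pos.2 (one_div_lt_one_div_of_lt hr hrp)
  set b := (2 * E.C) ^ δ⁻¹
  have hb : 1 < b := Real.one_lt_rpow (by linarith [E.one_le_C]) (inv_pos.2 hδ)
  have hb0 : 0 < b := zero_lt_one.trans hb
  refine (E.rho_mono_pos fun t ht => ?_).trans_lt (E.rho_tsum_chiIoo_lt_top
    (fun k => b ^ ((k : ℝ) + 1)) (fun k => b ^ (-(k / r)))
    (fun k => c * ((b ^ ((k : ℝ) + 1))⁻¹) ^ (-(1 / p)))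
    (fun k => by positivity) (fun k => by positivity) (fun k => by positivity)
    (fun k => hdil _ (by positivity)
      (inv_lt_one_of_one_lt₀ (Real.one_lt_rpow hb (by positivity))))
    (((summable_pow_mul_rpow_sub E.C_pos hδ (1 / p)).mul_left c).congr fun k => ?_))
  · rcases lt_or_ge t 1 with ht1 | ht1
    · refine (min_le_right _ _).trans (le_trans ?_ (ENNReal.le_tsum 0))
      simp [chiIoo, ht, ht1.trans hb]
    · obtain ⟨k, hk, hkt⟩ := exists_nat_pow_near ht1 hb
      rw [← Real.rpow_natCast] at hk
      rw [← Real.rpow_natCast, Nat.cast_succ] at hkt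
      refine (min_le_left _ _).trans (le_trans ?_ (ENNReal.le_tsum k))
      rw [chiIoo, indicator_of_mem (mem_Ioo.2 ⟨ht, hkt⟩), mul_one]
      gcongr
      calc t ^ (-(1 / r)) ≤ (b ^ (k : ℝ)) ^ (-(1 / r)) :=
            Real.rpow_le_rpow_of_nonpos (by positivity) hk (by simp [hr.le])
        _ = b ^ (-(k / r)) := by rw [← Real.rpow_mul hb0.le]; ring_nf
  · have hexp : b ^ (-(k / r)) * ((b ^ ((k : ℝ) + 1))⁻¹) ^ (-(1 / p))
        = b ^ (1 / p - δ * k) := by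
      rw [← Real.rpow_neg hb0.le, ← Real.rpow_mul hb0.le, ← Real.rpow_add hb0, hδ_def]
      ring_nf
    rw [← hexp]
    ring

theorem rho_indicator_rpow_neg_lt_top {β q c : ℝ} (hβ : 0 ≤ β) (hβq : β < 1 / q)
    (hc : 0 ≤ c) (hdil : ∀ a, 1 ≤ a → dilNorm E a ≤ ENNReal.ofReal (c * a ^ (-(1 / q)))) :
    E.ρ ((Ioo 0 1).indicator fun t => ENNReal.ofReal (t ^ (-β))) < ⊤ := by
  set δ := 1 / q - β with hδ_def
  have hδ : 0 < δ := sub_pos.2 hβq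
  set b := (2 * E.C) ^ δ⁻¹
  have hb : 1 < b := Real.one_lt_rpow (by linarith [E.one_le_C]) (inv_pos.2 hδ)
  have hb0 : 0 < b := zero_lt_one.trans hb
  refine (E.rho_mono_pos fun t ht => ?_).trans_lt (E.rho_tsum_chiIoo_lt_top
    (fun k => b ^ (-(k : ℝ))) (fun k => b ^ (((k : ℝ) + 1) * β))
    (fun k => c * ((b ^ (-(k : ℝ)))⁻¹) ^ (-(1 / q)))
    (fun k => by positivity) (fun k => by positivity) (fun k => by positivity)
    (fun k => hdil _ (by
      rw [← Real.rpow_neg hb0.le, neg_neg]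
      exact Real.one_le_rpow hb.le (Nat.cast_nonneg k)))
    (((summable_pow_mul_rpow_sub E.C_pos hδ β).mul_left c).congr fun k => ?_))
  · rcases lt_or_ge t 1 with ht1 | ht1
    · obtain ⟨k, hk, hkt⟩ := exists_nat_rpow_neg_le_lt hb ht ht1
      rw [indicator_of_mem (mem_Ioo.2 ⟨ht, ht1⟩)]
      refine le_trans ?_ (ENNReal.le_tsum k)
      rw [chiIoo, indicator_of_mem (mem_Ioo.2 ⟨ht, hkt⟩), mul_one]
      gcongr
      calc t ^ (-β) ≤ (b ^ (-((k : ℝ) + 1))) ^ (-β) :=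
            Real.rpow_le_rpow_of_nonpos (by positivity) hk (neg_nonpos.2 hβ)
        _ = b ^ (((k : ℝ) + 1) * β) := by rw [← Real.rpow_mul hb0.le]; ring_nf
    · rw [indicator_of_notMem fun h => ht1.not_gt h.2]
      exact zero_le
  · have hexp : b ^ (((k : ℝ) + 1) * β) * ((b ^ (-(k : ℝ)))⁻¹) ^ (-(1 / q))
        = b ^ (β - δ * k) := by
      rw [← Real.rpow_neg hb0.le, ← Real.rpow_mul hb0.le, ← Real.rpow_add hb0, hδ_def]
      ring_nf
    rw [← hexp]
    ring

theorem exists_lowerBoyd_bound {r : ℝ} (hr : ENNReal.ofReal r < lowerBoyd E) :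
    ∃ p c : ℝ, r < p ∧ 0 < c ∧
      ∀ a, 0 < a → a < 1 → dilNorm E a ≤ ENNReal.ofReal (c * a ^ (-(1 / p))) := by
  obtain ⟨_, ⟨p, ⟨hp, c, hc, hdil⟩, rfl⟩, hrp⟩ := lt_sSup_iff.1 hr
  exact ⟨p, c, (ENNReal.ofReal_lt_ofReal_iff hp).1 hrp, hc, hdil⟩

theorem exists_upperBoyd_bound {x : ℝ} (hx : 0 < x) (h : ENNReal.ofReal x < (upperBoyd E)⁻¹) :
    ∃ q c : ℝ, x < 1 / q ∧ 0 < c ∧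
      ∀ a, 1 ≤ a → dilNorm E a ≤ ENNReal.ofReal (c * a ^ (-(1 / q))) := by
  obtain ⟨_, ⟨q, ⟨hq, c, hc, hdil⟩, rfl⟩, hqx⟩ :=
    sInf_lt_iff.1 (ENNReal.lt_inv_iff_lt_inv.1 h)
  rw [← ENNReal.ofReal_inv_of_pos hx, ENNReal.ofReal_lt_ofReal_iff (inv_pos.2 hx)] at hqx
  exact ⟨q, c, by rwa [one_div, lt_inv_comm₀ hx hq], hc, hdil⟩

end RIQBFS

/-- Let `E` be a r.i. quasi-Banach function space with Boyd indices `p_E, q_E`, let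
`0 < Θ < ∞`, `0 < r < p_E`, and assume either (`q_E < ∞` and `1/Θ + 1/q_E > 1/r`) or
(`q_E = ∞` and `1/Θ ≥ 1/r`). Then `ρ_E(t ↦ min{t^{-1/r}, t^{1/Θ − 1/r}}) < ∞`. -/
theorem stmt7 (E : RIQBFS) (Θ r : ℝ) (hΘ : 0 < Θ) (hr : 0 < r)
    (hrE : ENNReal.ofReal r < lowerBoyd E)
    (hq : (upperBoyd E ≠ ⊤ ∧
        ENNReal.ofReal (1 / r) < ENNReal.ofReal (1 / Θ) + (upperBoyd E)⁻¹) ∨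
      (upperBoyd E = ⊤ ∧ 1 / r ≤ 1 / Θ)) :
    E.ρ (fun t => min (ENNReal.ofReal (t ^ (-(1 / r))))
      (ENNReal.ofReal (t ^ (1 / Θ - 1 / r)))) < ⊤ := by
  obtain ⟨p, c₁, hrp, hc₁, hdil₁⟩ := E.exists_lowerBoyd_bound hrE
  have hG := E.rho_min_rpow_neg_one_lt_top hr hrp hc₁.le hdil₁
  have hlarge : ∀ t, 1 ≤ t →
      min (ENNReal.ofReal (t ^ (-(1 / r)))) (ENNReal.ofReal (t ^ (1 / Θ - 1 / r)))
        ≤ min (ENNReal.ofReal (t ^ (-(1 / r)))) 1 := fun t ht =>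
    le_min (min_le_left _ _) ((min_le_left _ _).trans
      (ENNReal.ofReal_le_one.2 (Real.rpow_le_one_of_one_le_of_nonpos ht (by simp [hr.le]))))
  rcases le_or_gt (1 / r) (1 / Θ) with hle | hlt
  · refine (E.rho_mono_pos fun t ht => ?_).trans_lt hG
    rcases le_total t 1 with ht1 | ht1
    · exact min_le_min_left _
        (ENNReal.ofReal_le_one.2 (Real.rpow_le_one ht.le ht1 (sub_nonneg.2 hle)))
    · exact hlarge t ht1
  · set β := 1 / r - 1 / Θ
    have hβ : 0 < β := sub_pos.2 hlt
    have hqE : ENNReal.ofReal (1 / r) < ENNReal.ofReal (1 / Θ) + (upperBoyd E)⁻¹ :=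
      hq.elim And.right fun h => absurd h.2 hlt.not_ge
    rw [show 1 / r = 1 / Θ + β by ring, ENNReal.ofReal_add (by positivity) hβ.le,
      ENNReal.add_lt_add_iff_left ENNReal.ofReal_ne_top] at hqE
    obtain ⟨q, c₂, hβq, hc₂, hdil₂⟩ := E.exists_upperBoyd_bound hβ hqE
    have hH := E.rho_indicator_rpow_neg_lt_top hβ.le hβq hc₂.le hdil₂
    calc _ ≤ E.ρ (fun t => min (ENNReal.ofReal (t ^ (-(1 / r)))) 1 +
          (Ioo 0 1).indicator (fun t => ENNReal.ofReal (t ^ (-β))) t) := by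
          refine E.rho_mono_pos fun t ht => ?_
          rcases lt_or_ge t 1 with ht1 | ht1
          · rw [indicator_of_mem (mem_Ioo.2 ⟨ht, ht1⟩), show -β = 1 / Θ - 1 / r by ring]
            exact (min_le_right _ _).trans le_add_self
          · exact (hlarge t ht1).trans le_self_add
      _ ≤ ENNReal.ofReal E.C * (E.ρ _ + E.ρ _) := E.quasi_triangle _ _
      _ < ⊤ := ENNReal.mul_lt_top ENNReal.ofReal_lt_top (ENNReal.add_lt_top.2 ⟨hG, hH⟩)
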